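/- arXiv:1703.03271 — 2 statements merged into one kernel-verified Lean document; each statement's English description precedes it below -/
import Mathlib

section
/- Suppose $y_{mn} = y_{m0} + y_{0n} - y_{00}$ for a $2\times 2$ block, i.e. $y_{11}=y_{10}+y_{01}-y_{00}$. Then the value $\bar{y}_{11}$ determined by the six-point multi-ratio equation on $\{y_0,\bar{y}_{11}\},\{y_{01},y_{10}\},\{y_{00},y_{11}\}$ equals $y_{10}+y_{01}-y_0$. (That is, the additive-group solution $y_{mn}=y_{00}^{-1}*y_{m0}*y_{0n}$ with $*$ being field addition is preserved by the action $r_0$, which swaps $y_0$ and $y_{00}$.) -/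
theorem eq_of_mul_sub_eq_mul_sub {R : Type*} [CommRing R] [NoZeroDivisors R] {a b p q z w : R}
    (hab : a ≠ b) (hz : a * (p - z) = b * (q - z)) (hw : a * (p - w) = b * (q - w)) :
    z = w := by
  have h : (a - b) * (w - z) = 0 := by linear_combination hz - hw
  exact (sub_eq_zero.mp ((mul_eq_zero.mp h).resolve_left (sub_ne_zero.mpr hab))).symm

/-- The additive-group solution `y₁₁ = y₁₀ + y₀₁ - y₀₀` is preserved by the
action `r₀`: the updated value is `ȳ₁₁ = y₁₀ + y₀₁ - y₀`. -/
theorem stmt_5 {K : Type*} [Field K] (y0 y00 y10 y01 y11 z : K)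
    (h11 : y11 = y10 + y01 - y00)
    (hnd : (y0 - y10) * (y01 - y11) ≠ (y0 - y11) * (y00 - y10))
    (hz : (y0 - y10) * (y01 - y11) * (y00 - z)
        = (y0 - y11) * (y00 - y10) * (y01 - z)) :
    z = y10 + y01 - y0 := by
  subst h11
  exact eq_of_mul_sub_eq_mul_sub hnd hz (by ring)
end

section
/- In the case $k=0$, $i=j=1$ of Coble's group, the generators $r_0$ and $s_1$ (swapping row 0 and row 1 of the $y$-array) satisfy $(r_0 s_1)^3 = \mathrm{id}$ generically. -/
/-!
The relation `MultiRatio y₀ y₀₀ y₁₀ y₀₁ y₁₁ z` is invariant under the rotation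
`(y₀, y₀₀, y₁₀, y₀₁, y₁₁, z) ↦ (y₀₀, y₀₁, z, y₀, y₁₀, y₁₁)`, and `r₀ s₁` relabels the
state by exactly this rotation. Hence after one step of `r₀ s₁` the relation produced
by `r₀` is, rotated once or twice, the relation that the next applications of `r₀`
solve; by uniqueness of the solution they restore `y₁₀` and then `y₁₁`.
-/

/-- State: `(y₀, y₀₀, y₁₀, y₀₁, y₁₁)`. -/
abbrev CobleState (K : Type*) := K × K × K × K × K

/-- Denominator (leading coefficient) of the multi-ratio equation, linear in
the unknown `ȳ₁₁`. -/
def mrDen {K : Type*} [Field K] (s : CobleState K) : K :=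
  match s with
  | (y0, y00, y10, y01, y11) =>
      (y0 - y11) * (y00 - y10) - (y0 - y10) * (y01 - y11)

/-- The unique solution `ȳ₁₁` of
`(y₀-y₁₀)(y₀₁-y₁₁)(y₀₀-z) = (y₀-y₁₁)(y₀₀-y₁₀)(y₀₁-z)`. -/
def mrBar {K : Type*} [Field K] (s : CobleState K) : K :=
  match s with
  | (y0, y00, y10, y01, y11) =>
      ((y0 - y11) * (y00 - y10) * y01 - (y0 - y10) * (y01 - y11) * y00) /
        mrDen (y0, y00, y10, y01, y11)

/-- The generator `r₀`: swap `y₀ ↔ y₀₀` and update `y₁₁` by the multi-ratio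
equation. -/
def cobleR0 {K : Type*} [Field K] (s : CobleState K) : CobleState K :=
  match s with
  | (y0, y00, y10, y01, y11) => (y00, y0, y10, y01, mrBar (y0, y00, y10, y01, y11))

/-- The generator `s₁`: swap row 0 and row 1 of the array, i.e.
`y₀₀ ↔ y₀₁` and `y₁₀ ↔ y₁₁`. -/
def cobleS1 {K : Type*} [Field K] (s : CobleState K) : CobleState K :=
  match s with
  | (y0, y00, y10, y01, y11) => (y0, y01, y11, y00, y10)

def MultiRatio {K : Type*} [CommRing K] (y0 y00 y10 y01 y11 z : K) : Prop :=
  (y0 - y10) * (y01 - y11) * (y00 - z) = (y0 - y11) * (y00 - y10) * (y01 - z)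

theorem MultiRatio.rotate {K : Type*} [CommRing K] {y0 y00 y10 y01 y11 z : K}
    (h : MultiRatio y0 y00 y10 y01 y11 z) : MultiRatio y00 y01 z y0 y10 y11 := by
  unfold MultiRatio at h ⊢
  linear_combination h

theorem multiRatio_iff_eq_mrBar {K : Type*} [Field K] {y0 y00 y10 y01 y11 z : K}
    (h : mrDen (y0, y00, y10, y01, y11) ≠ 0) :
    MultiRatio y0 y00 y10 y01 y11 z ↔ z = mrBar (y0, y00, y10, y01, y11) := by
  simp only [MultiRatio, mrBar, mrDen] at h ⊢
  rw [eq_div_iff h]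
  constructor <;> intro hz <;> linear_combination hz

/-- The braid relation `(r₀ s₁)³ = id` in the case `k = 0`, `i = j = 1`,
on the open set where each application of `r₀` is defined. -/
theorem stmt_12 {K : Type*} [Field K] (s : CobleState K)
    (h1 : mrDen (cobleS1 s) ≠ 0)
    (h2 : mrDen (cobleS1 (cobleR0 (cobleS1 s))) ≠ 0)
    (h3 : mrDen (cobleS1 (cobleR0 (cobleS1 (cobleR0 (cobleS1 s))))) ≠ 0) :
    cobleR0 (cobleS1 (cobleR0 (cobleS1 (cobleR0 (cobleS1 s))))) = s := by
  obtain ⟨a, b, c, d, e⟩ := s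
  simp only [cobleS1, cobleR0] at h1 h2 h3 ⊢
  have hB : MultiRatio a d e b c (mrBar (a, d, e, b, c)) :=
    (multiRatio_iff_eq_mrBar h1).mpr rfl
  have hc : mrBar (d, b, mrBar (a, d, e, b, c), a, e) = c :=
    ((multiRatio_iff_eq_mrBar h2).mp hB.rotate).symm
  rw [hc] at h3 ⊢
  have he : mrBar (b, a, c, d, mrBar (a, d, e, b, c)) = e :=
    ((multiRatio_iff_eq_mrBar h3).mp hB.rotate.rotate).symm
  rw [he]
end
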